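/- Let (ℙ^x)_{x∈E} be a diffusion: for every x ∈ E the pushforward of ℙ^x under evaluation at time 0 is the Dirac measure δ_x, and x ↦ ℙ^x is weakly continuous. Let obs : E → [0,1] be continuous, fix 0 < c < 1, and define d_0^c(x,y) := |obs(x) − obs(y)|, d_{n+1}^c := G_c(d_n^c), d̄^c := sup_{n∈ℕ} d_n^c. If m is a lower semi-continuous 1-bounded pseudometric on E such that G_c(m) = m pointwise and m(x,y) ≥ |obs(x) − obs(y)| for all x, y ∈ E, then m(x,y) ≥ d̄^c(x,y) for all x, y ∈ E. -/

import Mathlib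

open MeasureTheory Topology Filter BoundedContinuousFunction NNReal

noncomputable section

/-- A 1-bounded pseudometric on a type `X`. -/
structure IsPseudometric {X : Type*} (m : X → X → ℝ) : Prop where
  nonneg : ∀ x y, 0 ≤ m x y
  le_one : ∀ x y, m x y ≤ 1
  refl : ∀ x, m x x = 0
  symm : ∀ x y, m x y = m y x
  triangle : ∀ x y z, m x z ≤ m x y + m y z

/-- `γ` is a coupling of `P` and `Q`. -/
def IsCoupling {X Y : Type*} [MeasurableSpace X] [MeasurableSpace Y]
    (γ : Measure (X × Y)) (P : Measure X) (Q : Measure Y) : Prop :=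
  IsProbabilityMeasure γ ∧ γ.map Prod.fst = P ∧ γ.map Prod.snd = Q

/-- The optimal transport cost `W(c)(P,Q) = inf_{γ ∈ Γ(P,Q)} ∫ c dγ`. -/
def Wc {X : Type*} [MeasurableSpace X] (c : X → X → ℝ) (P Q : Measure X) : ℝ :=
  sInf {r : ℝ | ∃ γ : Measure (X × X), IsCoupling γ P Q ∧ r = ∫ z, c z.1 z.2 ∂γ}

/-- The space of (bounded) continuous trajectories `[0,∞) → E`, with the uniform metric. -/
abbrev Traj (E : Type*) [PseudoMetricSpace E] := BoundedContinuousFunction ℝ≥0 E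

instance {E : Type*} [PseudoMetricSpace E] : MeasurableSpace (Traj E) := borel _
instance {E : Type*} [PseudoMetricSpace E] : BorelSpace (Traj E) := ⟨rfl⟩

/-- The discounted uniform pseudometric `U_c(m)(ω,ω') = sup_{t ≥ 0} c^t · m(ω(t), ω'(t))`. -/
def Udisc {E : Type*} [PseudoMetricSpace E] (c : ℝ) (m : E → E → ℝ)
    (ω ω' : Traj E) : ℝ :=
  ⨆ t : ℝ≥0, c ^ (t : ℝ) * m (ω t) (ω' t)

/-- `P_t(x)`: the pushforward of `ℙ^x` under evaluation at time `t`. -/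
def kernelAt {E : Type*} [PseudoMetricSpace E] [MeasurableSpace E]
    (ℙ : E → Measure (Traj E)) (t : ℝ≥0) (x : E) : Measure E :=
  (ℙ x).map fun ω => ω t

/-- The functional `F_c(m)(x,y) = sup_{t ≥ 0} c^t W(m)(P_t(x), P_t(y))`. -/
def Ffun {E : Type*} [PseudoMetricSpace E] [MeasurableSpace E]
    (ℙ : E → Measure (Traj E)) (c : ℝ) (m : E → E → ℝ) (x y : E) : ℝ :=
  ⨆ t : ℝ≥0, c ^ (t : ℝ) * Wc m (kernelAt ℙ t x) (kernelAt ℙ t y)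

/-- The functional `G_c(m)(x,y) = W(U_c(m))(ℙ^x, ℙ^y)`. -/
def Gfun {E : Type*} [PseudoMetricSpace E] [MeasurableSpace E]
    (ℙ : E → Measure (Traj E)) (c : ℝ) (m : E → E → ℝ) (x y : E) : ℝ :=
  Wc (Udisc c m) (ℙ x) (ℙ y)

/-- The family `x ↦ ℙ^x` is weakly continuous: if `xₙ → x` then
`∫ F dℙ^{xₙ} → ∫ F dℙ^x` for every bounded continuous `F`. -/
def WeaklyContinuousFamily {A B : Type*} [TopologicalSpace A] [TopologicalSpace B]
    [MeasurableSpace B] (ℙ : A → Measure B) : Prop :=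
  ∀ (F : B →ᵇ ℝ) (x : A) (u : ℕ → A), Tendsto u atTop (nhds x) →
    Tendsto (fun n => ∫ ω, F ω ∂(ℙ (u n))) atTop (nhds (∫ ω, F ω ∂(ℙ x)))

-- AUX START
section Aux

variable {E : Type*} [MetricSpace E] [MeasurableSpace E] [BorelSpace E]

lemma rpow_mem_unit {c : ℝ} (hc0 : 0 < c) (hc1 : c ≤ 1) (t : ℝ≥0) :
    0 ≤ c ^ (t : ℝ) ∧ c ^ (t : ℝ) ≤ 1 :=
  ⟨(Real.rpow_pos_of_pos hc0 _).le, Real.rpow_le_one hc0.le hc1 t.coe_nonneg⟩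

lemma udisc_nonneg {c : ℝ} (hc0 : 0 < c) {m : E → E → ℝ} (hm0 : ∀ x y, 0 ≤ m x y)
    (ω ω' : Traj E) : 0 ≤ Udisc c m ω ω' :=
  Real.iSup_nonneg fun t => mul_nonneg (Real.rpow_pos_of_pos hc0 _).le (hm0 _ _)

lemma udisc_le_one {c : ℝ} (hc0 : 0 < c) (hc1 : c ≤ 1) {m : E → E → ℝ}
    (hm0 : ∀ x y, 0 ≤ m x y) (hm1 : ∀ x y, m x y ≤ 1) (ω ω' : Traj E) :
    Udisc c m ω ω' ≤ 1 :=
  Real.iSup_le (fun t => mul_le_one₀ (rpow_mem_unit hc0 hc1 t).2 (hm0 _ _) (hm1 _ _)) zero_le_one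

lemma udisc_bddAbove {c : ℝ} (hc0 : 0 < c) (hc1 : c ≤ 1) {m : E → E → ℝ}
    (hm0 : ∀ x y, 0 ≤ m x y) (hm1 : ∀ x y, m x y ≤ 1) (ω ω' : Traj E) :
    BddAbove (Set.range fun t : ℝ≥0 => c ^ (t : ℝ) * m (ω t) (ω' t)) := by
  refine ⟨1, ?_⟩
  rintro r ⟨t, rfl⟩
  exact mul_le_one₀ (rpow_mem_unit hc0 hc1 t).2 (hm0 _ _) (hm1 _ _)

lemma udisc_mono {c : ℝ} (hc0 : 0 < c) (hc1 : c ≤ 1) {m₁ m₂ : E → E → ℝ}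
    (hm0 : ∀ x y, 0 ≤ m₂ x y) (hm1 : ∀ x y, m₂ x y ≤ 1)
    (hle : ∀ x y, m₁ x y ≤ m₂ x y) (ω ω' : Traj E) :
    Udisc c m₁ ω ω' ≤ Udisc c m₂ ω ω' :=
  ciSup_mono (udisc_bddAbove hc0 hc1 hm0 hm1 ω ω') fun t =>
    mul_le_mul_of_nonneg_left (hle _ _) (Real.rpow_pos_of_pos hc0 _).le

/-- For lsc `m`, the discounted sup equals the sup over a countable dense set of times. -/
lemma udisc_eq_dense_sup {c : ℝ} (hc0 : 0 < c) (hc1 : c ≤ 1) {m : E → E → ℝ}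
    (hm0 : ∀ x y, 0 ≤ m x y) (hm1 : ∀ x y, m x y ≤ 1)
    (hlsc : LowerSemicontinuous fun p : E × E => m p.1 p.2)
    {D : Set ℝ≥0} (hD : Dense D) (hDne : D.Nonempty) (ω ω' : Traj E) :
    Udisc c m ω ω' = ⨆ s : D, c ^ ((s : ℝ≥0) : ℝ) * m (ω s) (ω' s) := by
  haveI : Nonempty D := hDne.to_subtype
  set g : ℝ≥0 → ℝ := fun t => c ^ (t : ℝ) * m (ω t) (ω' t) with hg
  have hbdd : BddAbove (Set.range g) := udisc_bddAbove hc0 hc1 hm0 hm1 ω ω'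
  have hbddD : BddAbove (Set.range fun s : D => g s) := by
    refine ⟨1, ?_⟩
    rintro r ⟨s, rfl⟩
    exact mul_le_one₀ (rpow_mem_unit hc0 hc1 s).2 (hm0 _ _) (hm1 _ _)
  refine le_antisymm (ciSup_le fun t => ?_) (ciSup_le fun s => le_ciSup hbdd (s : ℝ≥0))
  -- lower semicontinuity of g at t
  have hgl : LowerSemicontinuousAt g t := by
    intro y hy
    rcases lt_or_ge y 0 with hy0 | hy0
    · exact Eventually.of_forall fun s =>
        hy0.trans_le (mul_nonneg (Real.rpow_pos_of_pos hc0 _).le (hm0 _ _))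
    · set M := m (ω t) (ω' t) with hM
      set a := c ^ ((t : ℝ≥0) : ℝ) with ha
      have ha0 : 0 < a := Real.rpow_pos_of_pos hc0 _
      have hyaM : y < a * M := hy
      have hM0 : 0 < M := by
        by_contra h
        push_neg at h
        have : a * M ≤ 0 := mul_nonpos_of_nonneg_of_nonpos ha0.le h
        linarith
      set δ := min ((a * M - y) / (2 * (M + a))) (min (M / 2) (a / 2)) with hδ
      have hMa : 0 < M + a := by positivity
      have hδ0 : 0 < δ := by
        apply lt_min
        · apply div_pos (by linarith) (by positivity)
        · exact lt_min (by positivity) (by positivity)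
      have hδM : δ ≤ M / 2 := le_trans (min_le_right _ _) (min_le_left _ _)
      have hδa : δ ≤ a / 2 := le_trans (min_le_right _ _) (min_le_right _ _)
      have hδe : δ * (2 * (M + a)) ≤ a * M - y :=
        (le_div_iff₀ (by positivity)).mp (min_le_left _ _)
      -- eventually c^s close and m part large
      have hc_cont : ContinuousAt (fun s : ℝ≥0 => c ^ ((s : ℝ≥0) : ℝ)) t := by
        apply ContinuousAt.comp _ (continuous_subtype_val.continuousAt (x := t))
        exact Real.continuousAt_const_rpow hc0.ne'
      have h1 : ∀ᶠ s in nhds t, a - δ < c ^ ((s : ℝ≥0) : ℝ) := by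
        have : Set.Ioi (a - δ) ∈ nhds (c ^ ((t : ℝ≥0) : ℝ)) :=
          Ioi_mem_nhds (by rw [← ha]; linarith)
        exact hc_cont this
      have h2 : ∀ᶠ s in nhds t, M - δ < m (ω s) (ω' s) := by
        have hcont : Continuous fun s : ℝ≥0 => ((ω s, ω' s) : E × E) :=
          (map_continuous ω).prodMk (map_continuous ω')
        have hcomp := LowerSemicontinuousAt.comp
          (f := fun p : E × E => m p.1 p.2) (g := fun s : ℝ≥0 => ((ω s, ω' s) : E × E))
          (x := t) (hlsc _) hcont.continuousAt
        have : M - δ < (fun p : E × E => m p.1 p.2) ((fun s : ℝ≥0 => ((ω s, ω' s) : E × E)) t) := by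
          show M - δ < M
          linarith
        exact hcomp _ this
      filter_upwards [h1, h2] with s h1s h2s
      have hfac1 : (0:ℝ) ≤ a - δ := by linarith
      have hfac2 : (0:ℝ) ≤ M - δ := by linarith
      have hprod : (a - δ) * (M - δ) < g s :=
        mul_lt_mul'' h1s h2s hfac1 hfac2
      have hkey : y ≤ (a - δ) * (M - δ) := by
        nlinarith [sq_nonneg δ, hδ0.le]
      calc y ≤ (a - δ) * (M - δ) := hkey
        _ < g s := hprod
  -- density argument
  by_contra hcon
  push_neg at hcon
  obtain ⟨U, hUo, htU, hU⟩ : ∃ U : Set ℝ≥0, IsOpen U ∧ t ∈ U ∧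
      ∀ s ∈ U, (⨆ s : D, g s) < g s := by
    have := hgl _ hcon
    rcases eventually_nhds_iff.mp this with ⟨U, hU, hUo, htU⟩
    exact ⟨U, hUo, htU, hU⟩
  obtain ⟨s, hsD, hsU⟩ := hD.exists_mem_open hUo ⟨t, htU⟩
  exact absurd (le_ciSup hbddD (⟨s, hsD⟩ : D)) (not_le.mpr (hU s hsU))

lemma udisc_measurable [SecondCountableTopology E] {c : ℝ} (hc0 : 0 < c) (hc1 : c ≤ 1)
    {m : E → E → ℝ} (hm0 : ∀ x y, 0 ≤ m x y) (hm1 : ∀ x y, m x y ≤ 1)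
    (hlsc : LowerSemicontinuous fun p : E × E => m p.1 p.2) :
    Measurable fun p : Traj E × Traj E => Udisc c m p.1 p.2 := by
  obtain ⟨D, hDc, hDd⟩ := TopologicalSpace.exists_countable_dense ℝ≥0
  have hDne : D.Nonempty := hDd.nonempty
  haveI : Countable D := hDc.to_subtype
  have hmm : Measurable fun p : E × E => m p.1 p.2 := hlsc.measurable
  have : (fun p : Traj E × Traj E => Udisc c m p.1 p.2) =
      fun p => ⨆ s : D, c ^ ((s : ℝ≥0) : ℝ) * m (p.1 s) (p.2 s) := by
    funext p
    exact udisc_eq_dense_sup hc0 hc1 hm0 hm1 hlsc hDd hDne p.1 p.2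
  rw [this]
  apply Measurable.iSup
  intro s
  apply Measurable.const_mul
  have hev : Measurable fun p : Traj E × Traj E => ((p.1 s, p.2 s) : E × E) := by
    apply Measurable.prodMk
    · exact ((continuous_eval_const (F := Traj E) (s : ℝ≥0)).measurable).comp measurable_fst
    · exact ((continuous_eval_const (F := Traj E) (s : ℝ≥0)).measurable).comp measurable_snd
  exact hmm.comp hev

end Aux

theorem fixpoint_ge_dbar
    {E : Type*} [MetricSpace E] [PolishSpace E] [MeasurableSpace E] [BorelSpace E]
    (hΔ : ∀ x y : E, dist x y ≤ 1)
    (ℙ : E → Measure (Traj E)) (hprob : ∀ x, IsProbabilityMeasure (ℙ x))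
    (hdirac : ∀ x : E, (ℙ x).map (fun ω => ω 0) = Measure.dirac x)
    (hweak : WeaklyContinuousFamily ℙ)
    (obs : E → ℝ) (hobs_cont : Continuous obs) (hobs01 : ∀ x, obs x ∈ Set.Icc (0 : ℝ) 1)
    (c : ℝ) (hc0 : 0 < c) (hc1 : c < 1)
    (d : ℕ → E → E → ℝ)
    (hd0 : ∀ x y, d 0 x y = |obs x - obs y|)
    (hdsucc : ∀ n x y, d (n + 1) x y = Gfun ℙ c (d n) x y)
    (dbar : E → E → ℝ) (hdbar : ∀ x y, dbar x y = ⨆ n, d n x y)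
    (m : E → E → ℝ) (hpm : IsPseudometric m)
    (hlsc : LowerSemicontinuous fun p : E × E => m p.1 p.2)
    (hfix : ∀ x y, Gfun ℙ c m x y = m x y)
    (hdom : ∀ x y, |obs x - obs y| ≤ m x y) :
    ∀ x y, dbar x y ≤ m x y := by
  simp only [Gfun] at hdsucc hfix
  have hm0 := hpm.nonneg
  have hm1 := hpm.le_one
  have hUm_meas : Measurable (fun p : Traj E × Traj E => Udisc c m p.1 p.2) :=
    udisc_measurable hc0 hc1.le hm0 hm1 hlsc
  have hcoupling : ∀ x y : E, IsCoupling ((ℙ x).prod (ℙ y)) (ℙ x) (ℙ y) := by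
    intro x y
    haveI := hprob x; haveI := hprob y
    refine ⟨by infer_instance, ?_, ?_⟩
    · simp [Measure.map_fst_prod]
    · simp [Measure.map_snd_prod]
  have key : ∀ n, ∀ x y : E, 0 ≤ d n x y ∧ d n x y ≤ m x y := by
    intro n
    induction n with
    | zero => intro x y; rw [hd0]; exact ⟨abs_nonneg _, hdom x y⟩
    | succ n ih =>
      intro x y
      have hdn0 : ∀ a b, 0 ≤ d n a b := fun a b => (ih a b).1
      have hdnm : ∀ a b, d n a b ≤ m a b := fun a b => (ih a b).2
      constructor
      · rw [hdsucc]
        apply Real.sInf_nonneg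
        rintro r ⟨γ, hγ, rfl⟩
        exact integral_nonneg fun z => udisc_nonneg hc0 hdn0 z.1 z.2
      · rw [hdsucc, ← hfix x y]
        unfold Wc
        haveI := hprob x; haveI := hprob y
        apply le_csInf
        · exact ⟨_, (ℙ x).prod (ℙ y), hcoupling x y, rfl⟩
        · rintro r ⟨γ, hγ, rfl⟩
          haveI : IsProbabilityMeasure γ := hγ.1
          have hint : Integrable (fun z : Traj E × Traj E => Udisc c m z.1 z.2) γ := by
            refine (integrable_const (1:ℝ)).mono' hUm_meas.aestronglyMeasurable ?_
            refine Filter.Eventually.of_forall fun z => ?_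
            rw [Real.norm_eq_abs, abs_of_nonneg (udisc_nonneg hc0 hm0 z.1 z.2)]
            exact udisc_le_one hc0 hc1.le hm0 hm1 z.1 z.2
          have hle : ∫ z, Udisc c (d n) z.1 z.2 ∂γ ≤ ∫ z, Udisc c m z.1 z.2 ∂γ :=
            integral_mono_of_nonneg
              (Filter.Eventually.of_forall fun z => udisc_nonneg hc0 hdn0 z.1 z.2) hint
              (Filter.Eventually.of_forall fun z => udisc_mono hc0 hc1.le hm0 hm1 hdnm z.1 z.2)
          refine le_trans (csInf_le ?_ ⟨γ, hγ, rfl⟩) hle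
          exact ⟨0, by
            rintro s ⟨γ', hγ', rfl⟩
            exact integral_nonneg fun z => udisc_nonneg hc0 hdn0 z.1 z.2⟩
  intro x y
  rw [hdbar]
  exact ciSup_le fun n => (key n x y).2
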